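/- If A and B are bounded linear operators between Hilbert spaces H and K with A*A = A*B and range(A) ⊆ range(B) (i.e., A is below B in the left star order), then there exists an idempotent bounded operator Q on H such that A = P_A B = B Q, where P_A is the orthogonal projection onto the closure of range(A). In particular A is below B in the minus order. -/

import Mathlib

/-!
Since `A* (B - A) = 0`, the range of `B - A` lies in `ker A* = (range A)ᗮ`, so `P_A B = A`.
Douglas' lemma turns `range A ⊆ range B` into a bounded `C` with `B C = A`; then
`A C = P_A B C = P_A A = A`. With `P` the orthogonal projection onto `(ker A)ᗮ`, the operator
`Q = C P` satisfies `B Q = A P = A`, and it is idempotent because `C P x - P x ∈ ker A = ker P`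
gives `P C P = P`.
-/

open ContinuousLinearMap

/-- The orthogonal projection of `F` onto the closure of the range of `A`. -/
noncomputable def projCR {E F : Type*} [NormedAddCommGroup E] [InnerProductSpace ℂ E]
    [NormedAddCommGroup F] [InnerProductSpace ℂ F] [CompleteSpace F]
    (A : E →L[ℂ] F) : F →L[ℂ] F :=
  (LinearMap.range (A : E →ₗ[ℂ] F)).topologicalClosure.subtypeL ∘L
    Submodule.orthogonalProjectionOnto (LinearMap.range (A : E →ₗ[ℂ] F)).topologicalClosure

namespace ContinuousLinearMap

/-- `C x` is the preimage of `A x` under `B` lying in `U`; the closed graph theorem applies since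
the graph of `C` is `{(x, u) | B u = A x}`. -/
theorem exists_comp_eq_of_range_le_of_isCompl {𝕜 G H K : Type*} [NontriviallyNormedField 𝕜]
    [NormedAddCommGroup G] [NormedSpace 𝕜 G] [CompleteSpace G]
    [NormedAddCommGroup H] [NormedSpace 𝕜 H] [CompleteSpace H]
    [NormedAddCommGroup K] [NormedSpace 𝕜 K] {A : G →L[𝕜] K} {B : H →L[𝕜] K}
    (h : LinearMap.range (A : G →ₗ[𝕜] K) ≤ LinearMap.range (B : H →ₗ[𝕜] K))
    {U : Submodule 𝕜 H} (hU : IsClosed (U : Set H))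
    (hUB : IsCompl U (LinearMap.ker (B : H →ₗ[𝕜] K))) :
    ∃ C : G →L[𝕜] H, B ∘L C = A := by
  have : CompleteSpace U := hU.completeSpace_coe
  set BU := (B : H →ₗ[𝕜] K).domRestrict U
  have hinj : Function.Injective BU := LinearMap.injective_domRestrict_iff.mpr hUB.disjoint
  have hA : ∀ x, A x ∈ LinearMap.range BU := fun x ↦ by
    rw [LinearMap.range_domRestrict, Submodule.map_eq_range_iff.mpr hUB.codisjoint]
    exact h ⟨x, rfl⟩
  set g : G →ₗ[𝕜] U := (LinearEquiv.ofInjective BU hinj).symm.toLinearMap ∘ₗ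
    (A : G →ₗ[𝕜] K).codRestrict _ hA
  have hg : ∀ x, B (g x) = A x := fun x ↦
    congrArg Subtype.val ((LinearEquiv.ofInjective BU hinj).apply_symm_apply _)
  have hgraph : IsClosed (g.graph : Set (G × U)) := by
    have : (g.graph : Set (G × U)) = {p | B p.2 = A p.1} := by
      ext p
      simp only [SetLike.mem_coe, LinearMap.mem_graph_iff, Set.mem_ofPred_eq, ← hg]
      exact hinj.eq_iff.symm
    rw [this]
    exact isClosed_eq (by fun_prop) (by fun_prop)
  exact ⟨U.subtypeL ∘L .ofIsClosedGraph hgraph, ContinuousLinearMap.ext hg⟩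

section Idempotent

variable {R M N : Type*} [Ring R] [TopologicalSpace M] [AddCommGroup M] [Module R M]
  [TopologicalSpace N] [AddCommGroup N] [Module R N] {A : M →L[R] N} {C P : M →L[R] M}

theorem comp_eq_self_of_ker_le (hP : IsIdempotentElem P)
    (hker : LinearMap.ker (P : M →ₗ[R] M) ≤ LinearMap.ker (A : M →ₗ[R] N)) : A ∘L P = A := by
  ext x
  have hPP : P ∘L P = P := hP
  have : P (x - P x) = 0 := by rw [map_sub, ← comp_apply, hPP, sub_self]
  have := hker this
  rw [LinearMap.mem_ker, coe_coe, map_sub, sub_eq_zero] at this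
  exact this.symm

theorem isIdempotentElem_comp_of_ker_le (hP : IsIdempotentElem P) (hAC : A ∘L C = A)
    (hker : LinearMap.ker (A : M →ₗ[R] N) ≤ LinearMap.ker (P : M →ₗ[R] M)) :
    IsIdempotentElem (C ∘L P) := by
  have hPP : P ∘L P = P := hP
  have hPCP : P ∘L C ∘L P = P := by
    ext x
    have : A (C (P x) - P x) = 0 := by rw [map_sub, ← comp_apply, hAC, sub_self]
    have := hker this
    rw [LinearMap.mem_ker, coe_coe, map_sub, sub_eq_zero] at this
    rw [comp_apply, comp_apply, this, ← comp_apply, hPP]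
  change (C ∘L P) ∘L (C ∘L P) = C ∘L P
  rw [comp_assoc, hPCP]

end Idempotent

theorem ker_starProjection_orthogonal_ker {𝕜 H K : Type*} [RCLike 𝕜] [NormedAddCommGroup H]
    [InnerProductSpace 𝕜 H] [CompleteSpace H] [NormedAddCommGroup K] [NormedSpace 𝕜 K]
    (A : H →L[𝕜] K) :
    LinearMap.ker ((LinearMap.ker (A : H →ₗ[𝕜] K))ᗮ.starProjection : H →ₗ[𝕜] H) =
      LinearMap.ker (A : H →ₗ[𝕜] K) := by
  rw [Submodule.ker_starProjection, Submodule.orthogonal_orthogonal]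

end ContinuousLinearMap

section RangeProjection

variable {H K : Type*} [NormedAddCommGroup H] [InnerProductSpace ℂ H]
  [NormedAddCommGroup K] [InnerProductSpace ℂ K] [CompleteSpace K]

theorem projCR_comp_self (A : H →L[ℂ] K) : projCR A ∘L A = A := by
  ext x
  exact Submodule.starProjection_eq_self_iff.mpr
    (Submodule.le_topologicalClosure _ (LinearMap.mem_range_self _ x))

theorem projCR_comp_eq_of_adjoint_comp_eq [CompleteSpace H] {A B : H →L[ℂ] K}
    (h : adjoint A ∘L A = adjoint A ∘L B) : projCR A ∘L B = A := by
  ext x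
  have hperp : B x - A x ∈ (LinearMap.range (A : H →ₗ[ℂ] K)).topologicalClosureᗮ := by
    rw [Submodule.orthogonal_closure, orthogonal_range, LinearMap.mem_ker, coe_coe, map_sub,
      ← comp_apply, ← comp_apply, h, sub_self]
  have := (Submodule.starProjection_apply_eq_zero_iff _).mpr hperp
  rw [map_sub, sub_eq_zero] at this
  rw [comp_apply, projCR, ← Submodule.starProjection, this]
  exact congr($(projCR_comp_self A) x)

end RangeProjection

theorem stmt0 {H K : Type*} [NormedAddCommGroup H] [InnerProductSpace ℂ H] [CompleteSpace H]
    [NormedAddCommGroup K] [InnerProductSpace ℂ K] [CompleteSpace K]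
    (A B : H →L[ℂ] K)
    (h1 : (adjoint A) ∘L A = (adjoint A) ∘L B)
    (h2 : LinearMap.range (A : H →ₗ[ℂ] K) ≤ LinearMap.range (B : H →ₗ[ℂ] K)) :
    ∃ Q : H →L[ℂ] H, Q ∘L Q = Q ∧ A = (projCR A) ∘L B ∧ A = B ∘L Q := by
  have hPB : projCR A ∘L B = A := projCR_comp_eq_of_adjoint_comp_eq h1
  obtain ⟨C, hBC⟩ := exists_comp_eq_of_range_le_of_isCompl h2
    (Submodule.isClosed_orthogonal _) (Submodule.isCompl_orthogonal _).symm
  have hAC : A ∘L C = A := calc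
    A ∘L C = projCR A ∘L (B ∘L C) := by rw [← comp_assoc, hPB]
    _ = A := by rw [hBC, projCR_comp_self]
  set P := (LinearMap.ker (A : H →ₗ[ℂ] K))ᗮ.starProjection
  have hP : IsIdempotentElem P := Submodule.isIdempotentElem_starProjection _
  have hker := ker_starProjection_orthogonal_ker A
  refine ⟨C ∘L P, isIdempotentElem_comp_of_ker_le hP hAC hker.ge, hPB.symm, ?_⟩
  rw [← comp_assoc, hBC, comp_eq_self_of_ker_le hP hker.le]
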